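/- arXiv:1804.10803 — 2 statements merged into one kernel-verified Lean document; each statement's English description precedes it below -/
import Mathlib

section
/- Let V = ℝⁿ with the Euclidean inner product and let f : V → V be continuous. Suppose there exists M > 0 such that for all u ∈ V with |u| > M one has ⟪u, f(u)⟫ > 0. If x : ℝ → V is a 2π-periodic C² function satisfying ẍ(t) = (1−τ)·x(t) + τ·λ²·f(x(t)) for all t, for some τ ∈ [0,1] and λ > 0, then max_{t} |x(t)| ≤ M. -/
open Real
open scoped RealInnerProductSpace

/-!
Let `t₀` be a point where the continuous periodic function `‖x t‖²` attains its maximum.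
There its second derivative `2 (‖ẋ‖² + ⟪x, ẍ⟫)` is nonpositive. If `‖x t₀‖ > M`, the equation
gives `⟪x, ẍ⟫ = (1 - τ) ‖x‖² + τ λ² ⟪x, f x⟫ > 0` by the Nagumo condition, a contradiction.
-/

theorem Function.Periodic.exists_forall_ge_of_continuous {α : Type*} [LinearOrder α]
    [TopologicalSpace α] [ClosedIciTopology α] {f : ℝ → α} {c : ℝ}
    (hp : Function.Periodic f c) (hc : c ≠ 0) (hf : Continuous f) : ∃ x, ∀ y, f y ≤ f x := by
  obtain ⟨_, ⟨x, rfl⟩, hx⟩ :=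
    (hp.compact_of_continuous hc hf).exists_isGreatest (Set.range_nonempty f)
  exact ⟨x, fun y => hx ⟨y, rfl⟩⟩

theorem IsLocalMax.deriv_deriv_nonpos {f : ℝ → ℝ} {a : ℝ} (hmax : IsLocalMax f a)
    (hc : ContinuousAt f a) : deriv (deriv f) a ≤ 0 := by
  by_contra! hpos
  -- `a` is then also a local minimum, so `f` is locally constant near `a`
  have hmin := isLocalMin_of_deriv_deriv_pos hpos hmax.deriv_eq_zero hc
  have hconst : f =ᶠ[nhds a] fun _ => f a := by
    filter_upwards [hmax, hmin] with y hle hge using le_antisymm hle hge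
  exact hpos.ne' (by simp [hconst.deriv.deriv_eq])

theorem deriv_deriv_norm_sq {E : Type*} [NormedAddCommGroup E] [InnerProductSpace ℝ E]
    {x : ℝ → E} (hx : Differentiable ℝ x) (hx' : Differentiable ℝ (deriv x)) (t : ℝ) :
    deriv (deriv fun s => ‖x s‖ ^ 2) t = 2 * (‖deriv x t‖ ^ 2 + ⟪x t, deriv (deriv x) t⟫) := by
  have hfirst : deriv (fun s => ‖x s‖ ^ 2) = fun s => 2 * ⟪x s, deriv x s⟫ :=
    funext fun s => (hx s).hasDerivAt.norm_sq.deriv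
  rw [hfirst]
  refine (((hx t).hasDerivAt.inner ℝ (hx' t).hasDerivAt).const_mul 2).deriv.trans ?_
  rw [real_inner_self_eq_norm_sq]
  ring

theorem inner_smul_add_smul_pos {E : Type*} [NormedAddCommGroup E] [InnerProductSpace ℝ E]
    {u v : E} (huv : 0 < ⟪u, v⟫) {a b : ℝ} (ha : 0 ≤ a) (hb : 0 ≤ b) (hab : 0 < a + b) :
    0 < ⟪u, a • u + b • v⟫ := by
  have hu : u ≠ 0 := by
    rintro rfl
    simp at huv
  have hu2 : 0 < ‖u‖ ^ 2 := by positivity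
  rw [inner_add_right, real_inner_smul_right, real_inner_smul_right, real_inner_self_eq_norm_sq]
  rcases ha.eq_or_lt with rfl | ha
  · simp only [zero_add] at hab
    nlinarith
  · nlinarith

theorem stmt0_general {n : ℕ} (f : EuclideanSpace ℝ (Fin n) → EuclideanSpace ℝ (Fin n))
    (M : ℝ)
    (hNagumo : ∀ u : EuclideanSpace ℝ (Fin n), M < ‖u‖ → 0 < ⟪u, f u⟫)
    (x : ℝ → EuclideanSpace ℝ (Fin n)) (hx : ContDiff ℝ 2 x)
    (hper : Function.Periodic x (2 * π))
    (τ lam : ℝ) (hτ : τ ∈ Set.Icc (0:ℝ) 1) (hlam : 0 < lam)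
    (hode : ∀ t, deriv (deriv x) t = (1 - τ) • x t + (τ * lam ^ 2) • f (x t)) :
    ∀ t, ‖x t‖ ≤ M := by
  have hcont : Continuous fun s => ‖x s‖ ^ 2 := by fun_prop
  have hper' : Function.Periodic (fun s => ‖x s‖ ^ 2) (2 * π) := hper.comp (fun v => ‖v‖ ^ 2)
  obtain ⟨t₀, ht₀⟩ := hper'.exists_forall_ge_of_continuous (by positivity) hcont
  have hbound : ‖x t₀‖ ≤ M := by
    by_contra! hlarge
    have hconcave := IsLocalMax.deriv_deriv_nonpos (Filter.Eventually.of_forall ht₀)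
      hcont.continuousAt
    rw [deriv_deriv_norm_sq (hx.differentiable two_ne_zero) hx.differentiable_deriv_two,
      hode] at hconcave
    have hcoeff : 0 < 1 - τ + τ * lam ^ 2 := by
      rcases hτ.2.lt_or_eq with hτ1 | rfl
      · nlinarith [mul_nonneg hτ.1 (sq_nonneg lam)]
      · simpa using pow_pos hlam 2
    have hforce := inner_smul_add_smul_pos (hNagumo _ hlarge) (sub_nonneg.mpr hτ.2)
      (mul_nonneg hτ.1 (sq_nonneg lam)) hcoeff
    nlinarith [sq_nonneg ‖deriv x t₀‖]
  intro t
  have hle : ‖x t‖ ≤ ‖x t₀‖ := (sq_le_sq₀ (norm_nonneg _) (norm_nonneg _)).mp (ht₀ t)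
  exact hle.trans hbound

theorem stmt0 {n : ℕ} (f : EuclideanSpace ℝ (Fin n) → EuclideanSpace ℝ (Fin n))
    (hf : Continuous f) (M : ℝ) (hM : 0 < M)
    (hNagumo : ∀ u : EuclideanSpace ℝ (Fin n), M < ‖u‖ → 0 < ⟪u, f u⟫)
    (x : ℝ → EuclideanSpace ℝ (Fin n)) (hx : ContDiff ℝ 2 x)
    (hper : Function.Periodic x (2 * π))
    (τ lam : ℝ) (hτ : τ ∈ Set.Icc (0:ℝ) 1) (hlam : 0 < lam)
    (hode : ∀ t, deriv (deriv x) t = (1 - τ) • x t + (τ * lam ^ 2) • f (x t)) :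
    ∀ t, ‖x t‖ ≤ M :=
  stmt0_general f M hNagumo x hx hper τ lam hτ hlam hode
end

section
/- Let G be a finite group and A(G) its Burnside ring. For elements a, b ∈ A(G) write Φ(a) for the set of conjugacy classes with nonzero coefficient in a. Suppose: (i) a is invertible in A(G); (ii) (H) is maximal in (Φ(a) ∪ Φ(b)) \ {(G)}; (iii) (H) ∈ Φ(b) and (H) ∉ Φ(a). Then (H) ∈ Φ(a·b), i.e., the coefficient of (H) in a·b is nonzero. -/
/-! Writing `[K]` for the basis element `coeff.symm (Finsupp.single K 1)`, a product `[K] * y` has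
no coefficient outside the classes below `K`. Hence the coefficient of `(H)` in `x * y` only sees
the classes of `Φ(x)` above `(H)`; if `(G)` is the only one, it equals `x_G · y_H`. Taking `H = G`
shows that `x ↦ x_G` is multiplicative, so `a_G ≠ 0` for a unit `a`, and maximality of `(H)` gives
`(a * b)_H = a_G · b_H ≠ 0`. -/

section BurnsideCoefficients

variable {ι A : Type*} [Ring A] (coeff : A ≃+ (ι →₀ ℤ))

theorem sum_coeff_smul_symm_single (z : A) :
    ∑ i ∈ (coeff z).support, coeff z i • coeff.symm (Finsupp.single i 1) = z := by
  apply coeff.injective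
  simp only [map_sum, map_zsmul, AddEquiv.apply_symm_apply, Finsupp.smul_single, smul_eq_mul,
    mul_one]
  exact Finsupp.sum_single (coeff z)

theorem coeff_symm_single_mul_apply_eq_zero [LE ι]
    (hprod : ∀ H K L : ι,
      coeff (coeff.symm (Finsupp.single H 1) * coeff.symm (Finsupp.single K 1)) L ≠ 0 →
      L ≤ H ∧ L ≤ K)
    {K L : ι} (hLK : ¬ L ≤ K) (y : A) :
    coeff (coeff.symm (Finsupp.single K 1) * y) L = 0 := by
  rw [← sum_coeff_smul_symm_single coeff y, Finset.mul_sum, map_sum, Finsupp.finsetSum_apply]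
  refine Finset.sum_eq_zero fun j _ => ?_
  rw [mul_smul_comm, map_zsmul, Finsupp.smul_apply, smul_eq_mul, mul_eq_zero]
  exact .inr (not_not.mp fun h => hLK (hprod K j L h).1)

variable [LE ι] {g₀ : ι} (h1 : coeff 1 = Finsupp.single g₀ 1)
  (hprod : ∀ H K L : ι,
    coeff (coeff.symm (Finsupp.single H 1) * coeff.symm (Finsupp.single K 1)) L ≠ 0 →
    L ≤ H ∧ L ≤ K)
include h1 hprod

theorem coeff_mul_apply_of_forall_le_eq_top {x : A} (y : A) {L : ι}
    (hx : ∀ i ∈ (coeff x).support, L ≤ i → i = g₀) :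
    coeff (x * y) L = coeff x g₀ * coeff y L := by
  have hbasis_top : coeff.symm (Finsupp.single g₀ 1) = 1 := by
    rw [← h1, AddEquiv.symm_apply_apply]
  conv_lhs => rw [← sum_coeff_smul_symm_single coeff x]
  simp only [Finset.sum_mul, smul_mul_assoc, map_sum, map_zsmul, Finsupp.finsetSum_apply,
    Finsupp.smul_apply, smul_eq_mul]
  rw [Finset.sum_eq_single g₀]
  · rw [hbasis_top, one_mul]
  · intro i hi hig
    rw [coeff_symm_single_mul_apply_eq_zero coeff hprod (fun hLi => hig (hx i hi hLi)), mul_zero]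
  · intro hg
    rw [Finsupp.notMem_support_iff.mp hg, zero_mul]

end BurnsideCoefficients

theorem coeff_apply_top_ne_zero_of_isUnit {ι A : Type*} [PartialOrder ι] [Ring A]
    (coeff : A ≃+ (ι →₀ ℤ)) {g₀ : ι} (htop : ∀ i : ι, i ≤ g₀)
    (h1 : coeff 1 = Finsupp.single g₀ 1)
    (hprod : ∀ H K L : ι,
      coeff (coeff.symm (Finsupp.single H 1) * coeff.symm (Finsupp.single K 1)) L ≠ 0 →
      L ≤ H ∧ L ≤ K)
    {a : A} (ha : IsUnit a) : coeff a g₀ ≠ 0 := by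
  obtain ⟨u, rfl⟩ := ha
  have hmul := coeff_mul_apply_of_forall_le_eq_top coeff h1 hprod (x := (u : A)) (↑u⁻¹ : A)
    fun i _ hi => le_antisymm (htop i) hi
  rw [Units.mul_inv, h1, Finsupp.single_eq_same] at hmul
  exact left_ne_zero_of_mul_eq_one hmul.symm

theorem stmt9_general {ι : Type*} [PartialOrder ι] [DecidableEq ι] {A : Type*} [CommRing A]
    (coeff : A ≃+ (ι →₀ ℤ)) (g₀ : ι) (htop : ∀ i : ι, i ≤ g₀)
    (h1 : coeff 1 = Finsupp.single g₀ 1)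
    (hprod : ∀ H K L : ι,
      coeff (coeff.symm (Finsupp.single H 1) * coeff.symm (Finsupp.single K 1)) L ≠ 0 →
      L ≤ H ∧ L ≤ K)
    (a b : A) (H : ι)
    (ha : IsUnit a)
    (hmax : ∀ K : ι, K ∈ (coeff a).support ∪ (coeff b).support → K ≠ g₀ → H ≤ K → K = H)
    (hHb : H ∈ (coeff b).support) (hHa : H ∉ (coeff a).support) :
    H ∈ (coeff (a * b)).support := by
  have hab : coeff (a * b) H = coeff a g₀ * coeff b H :=
    coeff_mul_apply_of_forall_le_eq_top coeff h1 hprod b fun K hK hHK =>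
      not_not.mp fun hKg => hHa (hmax K (Finset.mem_union_left _ hK) hKg hHK ▸ hK)
  rw [Finsupp.mem_support_iff, hab]
  exact mul_ne_zero (coeff_apply_top_ne_zero_of_isUnit coeff htop h1 hprod ha)
    (Finsupp.mem_support_iff.mp hHb)

/-- Abstract model of the Burnside ring `A(G)` with the subconjugacy partial
order on the set `ι` of conjugacy classes of subgroups, `g₀ = (G)` the top
class, `1 = (G)`, and the structural fact that any class appearing in the
product `(H)·(K)` is subconjugate to both `H` and `K`.
Lemma: if `a` is invertible, `(H)` is maximal in `(Φ(a) ∪ Φ(b)) \ {(G)}`,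
`(H) ∈ Φ(b)` and `(H) ∉ Φ(a)`, then `(H) ∈ Φ(a·b)`. -/
theorem stmt9 {ι : Type*} [PartialOrder ι] [DecidableEq ι] {A : Type*} [CommRing A]
    (coeff : A ≃+ (ι →₀ ℤ)) (g₀ : ι) (htop : ∀ i : ι, i ≤ g₀)
    (h1 : coeff 1 = Finsupp.single g₀ 1)
    (hprod : ∀ H K L : ι,
      coeff (coeff.symm (Finsupp.single H 1) * coeff.symm (Finsupp.single K 1)) L ≠ 0 →
      L ≤ H ∧ L ≤ K)
    (a b : A) (H : ι)
    (ha : IsUnit a)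
    (hmax : ∀ K : ι, K ∈ (coeff a).support ∪ (coeff b).support → K ≠ g₀ → H ≤ K → K = H)
    (hHb : H ∈ (coeff b).support) (hHa : H ∉ (coeff a).support) (hH : H ≠ g₀) :
    H ∈ (coeff (a * b)).support :=
  stmt9_general coeff g₀ htop h1 hprod a b H ha hmax hHb hHa
end
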